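/- Let k ≥ 2 be an integer and let R be a finite commutative local ring with 2^{nr} elements, for integers n, r ≥ 1, such that R/J(R) is a field with 2^r elements. Then for any c = x₁ + x₂i + x₃j + x₄k ∈ H(R): if x₁ + x₂ + x₃ + x₄ ∈ J(R) or x₁ + x₂ + x₃ + x₄ − 1 ∈ J(R), then φ_k(H(R), c) = (−1)^k · 2^{(4nk−4n−k)r} · (2^{r+k−1} − 2^k + (2 − 2^r)^k), and otherwise φ_k(H(R), c) = (−1)^k · 2^{(4nk−4n−k)r} · (−2^k + (2 − 2^r)^k) (equalities of integers). -/

import Mathlib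

/-- A unit `u` of a ring is an *exceptional unit* if `1 - u` is also a unit. -/
def IsExceptionalUnit {R : Type*} [Ring R] (u : R) : Prop :=
  IsUnit u ∧ IsUnit (1 - u)

/-- `phiEU R k c` is the number of representations of `c` as an (ordered) sum of
`k` exceptional units of `R`, i.e. the number of `k`-tuples `(x 0, …, x (k-1))`
of exceptional units with `x 0 + ⋯ + x (k-1) = c`. -/
noncomputable def phiEU (R : Type*) [Ring R] (k : ℕ) (c : R) : ℕ :=
  Nat.card {x : Fin k → R // (∀ i, IsExceptionalUnit (x i)) ∧ ∑ i, x i = c}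


open Finset

private noncomputable def Ncnt (F : Type*) [Field F] (k : ℕ) (t : F) : ℕ :=
  Nat.card {x : Fin k → F // (∀ i, x i ≠ 0 ∧ x i ≠ 1) ∧ ∑ i, x i = t}

open scoped Classical in
private lemma Ncnt_one {F : Type*} [Field F] (t : F) :
    Ncnt F 1 t = if t = 0 ∨ t = 1 then 0 else 1 := by
  classical
  rw [Ncnt]
  split_ifs with h
  · have : IsEmpty {x : Fin 1 → F // (∀ i, x i ≠ 0 ∧ x i ≠ 1) ∧ ∑ i, x i = t} := by
      refine ⟨fun x => ?_⟩
      have hs : ∑ i, x.1 i = x.1 0 := by simp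
      rcases h with h | h
      · exact (x.2.1 0).1 (by rw [← hs, x.2.2, h])
      · exact (x.2.1 0).2 (by rw [← hs, x.2.2, h])
    exact Nat.card_of_isEmpty
  · push_neg at h
    have : Unique {x : Fin 1 → F // (∀ i, x i ≠ 0 ∧ x i ≠ 1) ∧ ∑ i, x i = t} := by
      refine ⟨⟨⟨fun _ => t, fun i => ⟨h.1, h.2⟩, by simp⟩⟩, ?_⟩
      rintro ⟨x, hx, hs⟩
      have hs' : ∑ i, x i = x 0 := by simp
      rw [hs'] at hs
      ext i
      have hi : i = 0 := Subsingleton.elim _ _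
      show x i = t
      rw [hi]; exact hs
    rw [Nat.card_unique]

private lemma Ncnt_succ {F : Type*} [Field F] [Fintype F] [DecidableEq F] (k : ℕ) (t : F) :
    Ncnt F (k+1) t =
      ∑ s ∈ univ.filter (fun s : F => ¬(s = 0 ∨ s = 1)), Ncnt F k (t - s) := by
  classical
  have e : {x : Fin (k+1) → F // (∀ i, x i ≠ 0 ∧ x i ≠ 1) ∧ ∑ i, x i = t} ≃
      Σ s : {s : F // ¬(s = 0 ∨ s = 1)},
        {x : Fin k → F // (∀ i, x i ≠ 0 ∧ x i ≠ 1) ∧ ∑ i, x i = t - s.1} := by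
    refine ⟨fun x => ⟨⟨x.1 (Fin.last k), by push_neg; exact x.2.1 _⟩,
        ⟨Fin.init x.1, fun i => x.2.1 _, ?_⟩⟩, fun p =>
        ⟨Fin.snoc p.2.1 p.1.1, ⟨?_, ?_⟩⟩, ?_, ?_⟩
    · have h := x.2.2
      rw [Fin.sum_univ_castSucc] at h
      exact eq_sub_of_add_eq h
    · intro i
      refine Fin.lastCases ?_ (fun j => ?_) i
      · have := p.1.2
        push_neg at this
        simpa using this
      · simpa using p.2.2.1 j
    · rw [Fin.sum_univ_castSucc]
      simp [sub_add_cancel, p.2.2.2]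
    · rintro ⟨x, hx⟩
      ext i
      simp [Fin.snoc_init_self]
    · rintro ⟨s, x⟩
      refine Sigma.subtype_ext ?_ ?_
      · exact Subtype.ext (by simp)
      · simp
  rw [Ncnt, Nat.card_congr e]
  have hcd : ∀ s : {s : F // ¬(s = 0 ∨ s = 1)},
      Nat.card {x : Fin k → F // (∀ i, x i ≠ 0 ∧ x i ≠ 1) ∧ ∑ i, x i = t - s.1}
        = Ncnt F k (t - s.1) := fun s => rfl
  haveI (s : {s : F // ¬(s = 0 ∨ s = 1)}) :
      Fintype {x : Fin k → F // (∀ i, x i ≠ 0 ∧ x i ≠ 1) ∧ ∑ i, x i = t - s.1} :=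
    Fintype.ofFinite _
  haveI : Fintype {s : F // ¬(s = 0 ∨ s = 1)} := Fintype.ofFinite _
  rw [Nat.card_eq_fintype_card, Fintype.card_sigma]
  have hmem : ∀ x : F, x ∈ univ.filter (fun s : F => ¬(s = 0 ∨ s = 1)) ↔ ¬(x = 0 ∨ x = 1) := by
    intro x; simp only [Finset.mem_filter, Finset.mem_univ, true_and]
  rw [Finset.sum_subtype _ hmem (fun s => Ncnt F k (t - s))]
  exact Finset.sum_congr rfl fun s _ => by rw [← hcd s, Nat.card_eq_fintype_card]

open scoped Classical in
private lemma field_count {F : Type*} [Field F] [Fintype F] (r : ℕ) (hr : 1 ≤ r)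
    (hF : Fintype.card F = 2 ^ r) :
    ∀ k, 1 ≤ k → ∀ t : F,
      (Ncnt F k t : ℤ) * 2 ^ r =
        if t = 0 ∨ t = 1 then (-1)^k * (2^(r+k-1) - 2^k + (2 - 2^r)^k)
        else (-1)^k * (-(2^k) + (2 - 2^r)^k) := by
  classical
  have htwo : (2 : F) = 0 := by
    have h := FiniteField.cast_card_eq_zero F
    rw [hF] at h
    push_cast at h
    exact pow_eq_zero_iff (by omega) |>.mp h
  have hneg1 : (-1 : F) = 1 := by linear_combination -htwo
  have hcard2 : 2 ≤ 2 ^ r := by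
    calc 2 = 2 ^ 1 := rfl
    _ ≤ 2 ^ r := Nat.pow_le_pow_right (by norm_num) hr
  refine Nat.le_induction ?_ ?_
  · intro t
    rw [Ncnt_one]
    split_ifs with h
    · norm_num
    · push_cast
      ring
  · intro k hk IH t
    obtain ⟨m, rfl⟩ : ∃ m, k = m + 1 := ⟨k - 1, by omega⟩
    set A : ℤ := (-1)^(m+1) * (2^(r+m) - 2^(m+1) + (2 - 2^r)^(m+1)) with hA
    set B : ℤ := (-1)^(m+1) * (-(2^(m+1)) + (2 - 2^r)^(m+1)) with hB
    have hIH : ∀ u : F, (Ncnt F (m+1) u : ℤ) * 2 ^ r =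
        if u = 0 ∨ u = 1 then A else B := fun u => IH u
    have step1 : (Ncnt F (m+1+1) t : ℤ) * 2 ^ r =
        ∑ s ∈ Finset.univ.filter (fun s : F => ¬(s = 0 ∨ s = 1)),
          (Ncnt F (m+1) (t - s) : ℤ) * 2 ^ r := by
      rw [Ncnt_succ]
      push_cast
      rw [Finset.sum_mul]
    have step2 : (Ncnt F (m+1+1) t : ℤ) * 2 ^ r =
        ∑ u ∈ Finset.univ.filter (fun u : F => ¬(u = t ∨ u = t - 1)),
          (if u = 0 ∨ u = 1 then A else B) := by
      rw [step1]
      refine Finset.sum_nbij' (i := fun s => t - s) (j := fun u => t - u) ?_ ?_ ?_ ?_ ?_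
      · intro s hs
        simp only [Finset.mem_filter, Finset.mem_univ, true_and] at hs ⊢
        push_neg at hs ⊢
        constructor
        · intro h; exact hs.1 (by linear_combination -h)
        · intro h; exact hs.2 (by linear_combination -h)
      · intro u hu
        simp only [Finset.mem_filter, Finset.mem_univ, true_and] at hu ⊢
        push_neg at hu ⊢
        constructor
        · intro h; exact hu.1 (by linear_combination -h)
        · intro h; exact hu.2 (by linear_combination -h)
      · intro s _; ring
      · intro u _; ring
      · intro s _
        rw [hIH (t - s)]
    have hne : t ≠ t - 1 := by
      intro h
      have h1 : (1 : F) = 0 := by linear_combination htwo - h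
      exact one_ne_zero h1
    have hfilter : Finset.univ.filter (fun u : F => ¬(u = t ∨ u = t - 1)) =
        Finset.univ \ {t, t - 1} := by
      ext u; simp [not_or]
    have hsub : ({t, t - 1} : Finset F) ⊆ Finset.univ := Finset.subset_univ _
    have hpair : ∑ u ∈ ({t, t - 1} : Finset F), (if u = 0 ∨ u = 1 then A else B)
        = (if t = 0 ∨ t = 1 then A else B) + (if t - 1 = 0 ∨ t - 1 = 1 then A else B) :=
      Finset.sum_pair hne
    have hf01 : Finset.univ.filter (fun u : F => u = 0 ∨ u = 1) = {0, 1} := by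
      ext u; simp [Finset.mem_insert]
    have hc01 : (Finset.univ.filter (fun u : F => u = 0 ∨ u = 1)).card = 2 := by
      rw [hf01]; exact Finset.card_pair zero_ne_one
    have hcnot : (Finset.univ.filter (fun u : F => ¬(u = 0 ∨ u = 1))).card = 2^r - 2 := by
      have := Finset.card_filter_add_card_filter_not
        (s := (Finset.univ : Finset F)) (p := fun u : F => u = 0 ∨ u = 1)
      rw [hc01] at this
      have hcu : (Finset.univ : Finset F).card = 2 ^ r := by
        rw [Finset.card_univ, hF]
      omega
    have hfull : ∑ u : F, (if u = 0 ∨ u = 1 then A else B)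
        = 2 * A + (2^r - 2) * B := by
      rw [Finset.sum_ite, Finset.sum_const, Finset.sum_const, hc01, hcnot,
        nsmul_eq_mul, nsmul_eq_mul]
      push_cast [Nat.cast_sub hcard2]
      ring
    have hE : r + (m+1+1) - 1 = r + m + 1 := by omega
    rw [step2, hfilter, Finset.sum_sdiff_eq_sub hsub, hpair, hfull]
    by_cases ht : t = 0 ∨ t = 1
    · have ht1 : t - 1 = 0 ∨ t - 1 = 1 := by
        rcases ht with h | h
        · right; rw [h]; linear_combination -htwo
        · left; rw [h]; ring
      rw [if_pos ht, if_pos ht1, if_pos ht, hE, hA, hB]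
      ring
    · have ht1 : ¬(t - 1 = 0 ∨ t - 1 = 1) := by
        push_neg at ht ⊢
        constructor
        · intro h; exact ht.2 (by linear_combination h)
        · intro h; exact ht.1 (by linear_combination h + htwo)
      rw [if_neg ht, if_neg ht1, if_neg ht, hA, hB]
      ring



private lemma phi_fiber {A B : Type*} [Ring A] [Ring B] (f : A →+* B)
    (hf : Function.Surjective ⇑f)
    (hu : ∀ a : A, IsUnit a ↔ IsUnit (f a))
    (m : ℕ) (c : A) :
    Nat.card {x : Fin (m+1) → A // (∀ i, IsExceptionalUnit (x i)) ∧ ∑ i, x i = c} =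
      Nat.card {y : Fin (m+1) → B // (∀ i, IsExceptionalUnit (y i)) ∧ ∑ i, y i = f c} *
        Nat.card (RingHom.ker f) ^ m := by
  classical
  set s : B → A := Function.surjInv hf with hsdef
  have hs : ∀ b, f (s b) = b := fun b => Function.surjInv_eq hf b
  have hexc : ∀ a : A, IsExceptionalUnit a ↔ IsExceptionalUnit (f a) := by
    intro a
    constructor
    · rintro ⟨h1, h2⟩
      exact ⟨(hu a).1 h1, by simpa [map_sub, map_one] using (hu (1 - a)).1 h2⟩
    · rintro ⟨h1, h2⟩
      refine ⟨(hu a).2 h1, (hu (1 - a)).2 ?_⟩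
      simpa [map_sub, map_one] using h2
  have e : {x : Fin (m+1) → A // (∀ i, IsExceptionalUnit (x i)) ∧ ∑ i, x i = c} ≃
      {y : Fin (m+1) → B // (∀ i, IsExceptionalUnit (y i)) ∧ ∑ i, y i = f c} ×
        (Fin m → RingHom.ker f) := by
    refine ⟨fun x => (⟨fun i => f (x.1 i), fun i => (hexc _).1 (x.2.1 i),
        by rw [← map_sum, x.2.2]⟩,
        fun i => ⟨x.1 i.castSucc - s (f (x.1 i.castSucc)),
          by simp [RingHom.mem_ker, map_sub, hs]⟩),
      fun p => ⟨Fin.snoc (fun i => s (p.1.1 i.castSucc) + (p.2 i : A))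
          (c - ∑ i : Fin m, (s (p.1.1 i.castSucc) + (p.2 i : A))), ?_, ?_⟩,
      ?_, ?_⟩
    case refine_1 =>
      intro i
      refine Fin.lastCases ?_ (fun j => ?_) i
      · rw [Fin.snoc_last]
        refine (hexc _).2 ?_
        have hlast : f (c - ∑ i : Fin m, (s (p.1.1 i.castSucc) + (p.2 i : A)))
            = p.1.1 (Fin.last m) := by
          rw [map_sub, map_sum]
          have h1 : ∀ i : Fin m, f (s (p.1.1 i.castSucc) + (p.2 i : A))
              = p.1.1 i.castSucc := by
            intro i
            rw [map_add, hs, RingHom.mem_ker.1 (p.2 i).2, add_zero]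
          rw [Finset.sum_congr rfl fun i _ => h1 i]
          have h2 := p.1.2.2
          rw [Fin.sum_univ_castSucc] at h2
          exact sub_eq_of_eq_add' h2.symm
        rw [hlast]
        exact p.1.2.1 _
      · rw [Fin.snoc_castSucc]
        refine (hexc _).2 ?_
        have h1 : f (s (p.1.1 j.castSucc) + (p.2 j : A)) = p.1.1 j.castSucc := by
          rw [map_add, hs, RingHom.mem_ker.1 (p.2 j).2, add_zero]
        rw [h1]
        exact p.1.2.1 _
    case refine_2 =>
      rw [Fin.sum_univ_castSucc]
      simp only [Fin.snoc_castSucc, Fin.snoc_last]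
      abel
    case refine_3 =>
      rintro ⟨x, hx⟩
      refine Subtype.ext ?_
      funext i
      dsimp only
      refine Fin.lastCases ?_ (fun j => ?_) i
      · rw [Fin.snoc_last]
        have h2 := hx.2
        rw [Fin.sum_univ_castSucc] at h2
        have hsum : ∑ i : Fin m, (s (f (x i.castSucc)) + (x i.castSucc - s (f (x i.castSucc))))
            = ∑ i : Fin m, x i.castSucc := Finset.sum_congr rfl fun i _ => by abel
        rw [hsum]
        exact sub_eq_of_eq_add' h2.symm
      · rw [Fin.snoc_castSucc]
        abel
    case refine_4 =>
      rintro ⟨⟨y, hy⟩, z⟩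
      have hg : ∀ i : Fin m, f (s (y i.castSucc) + (z i : A)) = y i.castSucc := by
        intro i
        rw [map_add, hs, RingHom.mem_ker.1 (z i).2, add_zero]
      have hglast : f (c - ∑ i : Fin m, (s (y i.castSucc) + (z i : A))) = y (Fin.last m) := by
        rw [map_sub, map_sum, Finset.sum_congr rfl fun i _ => hg i]
        have h2 := hy.2
        rw [Fin.sum_univ_castSucc] at h2
        exact sub_eq_of_eq_add' h2.symm
      refine Prod.ext ?_ ?_
      · refine Subtype.ext ?_
        funext i
        dsimp only
        refine Fin.lastCases ?_ (fun j => ?_) i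
        · simp only [Fin.snoc_last]
          exact hglast
        · simp only [Fin.snoc_castSucc]
          exact hg j
      · funext j
        refine Subtype.ext ?_
        dsimp only
        rw [Fin.snoc_castSucc, hg]
        abel
  rw [Nat.card_congr e, Nat.card_prod, Nat.card_fun]
  simp [Nat.card_eq_fintype_card]


open Quaternion

private def qres {R : Type*} [CommRing R] (I : Ideal R) (h2 : (2:R) ∈ I) :
    Quaternion R →+* R ⧸ I where
  toFun q := Ideal.Quotient.mk I (q.re + q.imI + q.imJ + q.imK)
  map_one' := by simp
  map_zero' := by simp
  map_add' x y := by
    simp only [re_add, imI_add, imJ_add, imK_add, ← map_add]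
    congr 1
    ring
  map_mul' x y := by
    rw [← map_mul, Ideal.Quotient.mk_eq_mk_iff_sub_mem]
    have h : (x*y).re + (x*y).imI + (x*y).imJ + (x*y).imK
        - (x.re + x.imI + x.imJ + x.imK) * (y.re + y.imI + y.imJ + y.imK)
        = 2 * (-(x.imI*y.imI) - x.imJ*y.imJ - x.imK*y.imK
            - x.imK*y.imJ - x.imI*y.imK - x.imJ*y.imI) := by
      simp only [re_mul, imI_mul, imJ_mul, imK_mul]
      ring
    rw [h]
    exact Ideal.mul_mem_right _ I h2

private lemma qres_apply {R : Type*} [CommRing R] (I : Ideal R) (h2 : (2:R) ∈ I)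
    (q : Quaternion R) :
    qres I h2 q = Ideal.Quotient.mk I (q.re + q.imI + q.imJ + q.imK) := rfl

private lemma qres_surj {R : Type*} [CommRing R] (I : Ideal R) (h2 : (2:R) ∈ I) :
    Function.Surjective (qres I h2) := by
  intro b
  obtain ⟨a, rfl⟩ := Ideal.Quotient.mk_surjective b
  exact ⟨(a : Quaternion R), by simp [qres_apply, re_coe, imI_coe, imJ_coe, imK_coe]⟩

/-- In a local ring `R` with `2 ∈ m`, a quaternion is a unit iff its coordinate sum
is a unit. -/
private lemma qres_isUnit {R : Type*} [CommRing R] [IsLocalRing R]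
    (h2 : (2:R) ∈ IsLocalRing.maximalIdeal R) (q : Quaternion R) :
    IsUnit q ↔ IsUnit (qres (IsLocalRing.maximalIdeal R) h2 q) := by
  constructor
  · exact fun h => h.map _
  · intro h
    -- coordinate sum is a unit in R
    have hS : IsUnit (q.re + q.imI + q.imJ + q.imK) := by
      by_contra hS
      have : q.re + q.imI + q.imJ + q.imK ∈ IsLocalRing.maximalIdeal R :=
        (IsLocalRing.mem_maximalIdeal _).2 hS
      have h0 : qres (IsLocalRing.maximalIdeal R) h2 q = 0 :=
        (Ideal.Quotient.eq_zero_iff_mem).2 this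
      haveI : Nontrivial (R ⧸ IsLocalRing.maximalIdeal R) :=
        Ideal.Quotient.nontrivial_iff.mpr (Ideal.IsMaximal.ne_top inferInstance)
      rw [h0] at h
      exact h.ne_zero rfl
    have hS2 : IsUnit (normSq q) := by
      by_contra hN
      have hNm : normSq q ∈ IsLocalRing.maximalIdeal R :=
        (IsLocalRing.mem_maximalIdeal _).2 hN
      have hdiff : (q.re + q.imI + q.imJ + q.imK)^2
          = normSq q + 2 * (q.re*q.imI + q.re*q.imJ + q.re*q.imK
              + q.imI*q.imJ + q.imI*q.imK + q.imJ*q.imK) := by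
        rw [normSq_def']
        ring
      have hmem : (q.re + q.imI + q.imJ + q.imK)^2 ∈ IsLocalRing.maximalIdeal R := by
        rw [hdiff]
        exact Ideal.add_mem _ hNm (Ideal.mul_mem_right _ _ h2)
      have hprime : (IsLocalRing.maximalIdeal R).IsPrime :=
        Ideal.IsMaximal.isPrime inferInstance
      have : q.re + q.imI + q.imJ + q.imK ∈ IsLocalRing.maximalIdeal R := by
        rcases hprime.mem_or_mem (by rwa [← sq] : (q.re + q.imI + q.imJ + q.imK)
            * (q.re + q.imI + q.imJ + q.imK) ∈ IsLocalRing.maximalIdeal R) with h' | h' <;>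
          exact h'
      exact ((IsLocalRing.mem_maximalIdeal _).1 this) hS
    obtain ⟨v, hv⟩ := isUnit_iff_exists_inv.1 hS2
    refine isUnit_iff_exists.2 ⟨star q * (v : Quaternion R), ?_, ?_⟩
    · rw [← mul_assoc, self_mul_star, ← Quaternion.coe_mul, hv, Quaternion.coe_one]
    · rw [mul_assoc, coe_commutes, ← mul_assoc, star_mul_self, ← Quaternion.coe_mul, hv, Quaternion.coe_one]

private lemma isExceptionalUnit_field_iff {F : Type*} [Field F] (u : F) :
    IsExceptionalUnit u ↔ (u ≠ 0 ∧ u ≠ 1) := by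
  rw [IsExceptionalUnit, isUnit_iff_ne_zero, isUnit_iff_ne_zero, sub_ne_zero]
  exact and_congr_right fun _ => ne_comm

private lemma qker_card {R : Type*} [CommRing R] [Fintype R] (I : Ideal R) (h2 : (2:R) ∈ I) :
    Nat.card (RingHom.ker (qres I h2)) = Nat.card I * Fintype.card R ^ 3 := by
  have e : RingHom.ker (qres I h2) ≃ I × R × R × R := by
    refine ⟨fun x => (⟨x.1.re + x.1.imI + x.1.imJ + x.1.imK,
        (Ideal.Quotient.eq_zero_iff_mem).1 (RingHom.mem_ker.1 x.2)⟩,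
        x.1.imI, x.1.imJ, x.1.imK),
      fun p => ⟨⟨p.1.1 - p.2.1 - p.2.2.1 - p.2.2.2, p.2.1, p.2.2.1, p.2.2.2⟩, ?_⟩, ?_, ?_⟩
    · show Ideal.Quotient.mk I ((p.1.1 - p.2.1 - p.2.2.1 - p.2.2.2 : R) + p.2.1 + p.2.2.1 + p.2.2.2) = 0
      rw [Ideal.Quotient.eq_zero_iff_mem]
      have h : (p.1.1 - p.2.1 - p.2.2.1 - p.2.2.2 : R) + p.2.1 + p.2.2.1 + p.2.2.2 = p.1.1 := by
        ring
      rw [h]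
      exact p.1.2
    · rintro ⟨q, hq⟩
      refine Subtype.ext ?_
      apply Quaternion.ext
      · show q.re + q.imI + q.imJ + q.imK - q.imI - q.imJ - q.imK = q.re
        ring
      · rfl
      · rfl
      · rfl
    · rintro ⟨⟨a, ha⟩, b, c, d⟩
      refine Prod.ext (Subtype.ext ?_) rfl
      show a - b - c - d + b + c + d = a
      ring
  rw [Nat.card_congr e, Nat.card_prod, Nat.card_prod, Nat.card_prod,
    Nat.card_eq_fintype_card (α := R)]
  ring


/-- Let `R` be a finite commutative local ring with `2^{nr}` elements such
that `R/J(R)` is a field with `2^r` elements. Then for `c = x₁ + x₂i + x₃j + x₄k ∈ H(R)`: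
if `x₁+x₂+x₃+x₄ ∈ J(R)` or `x₁+x₂+x₃+x₄ − 1 ∈ J(R)` then
`φ_k(H(R), c) = (−1)^k 2^{(4nk−4n−k)r} (2^{r+k−1} − 2^k + (2−2^r)^k)`,
and otherwise `φ_k(H(R), c) = (−1)^k 2^{(4nk−4n−k)r} (−2^k + (2−2^r)^k)`. -/
theorem phi_k_of_quaternions_over_local_ring_of_even_order
    (k n r : ℕ) (hk : 2 ≤ k) (hn : 1 ≤ n) (hr : 1 ≤ r)
    (R : Type*) [CommRing R] [Fintype R] [IsLocalRing R]
    (hcard : Fintype.card R = 2 ^ (n * r))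
    (hres : Nat.card (R ⧸ (⊥ : Ideal R).jacobson) = 2 ^ r)
    (c : Quaternion R) :
    ((c.re + c.imI + c.imJ + c.imK ∈ (⊥ : Ideal R).jacobson ∨
        c.re + c.imI + c.imJ + c.imK - 1 ∈ (⊥ : Ideal R).jacobson) →
      (phiEU (Quaternion R) k c : ℤ) =
        (-1) ^ k * 2 ^ ((4 * n * k - 4 * n - k) * r) *
          (2 ^ (r + k - 1) - 2 ^ k + (2 - 2 ^ r) ^ k)) ∧
    (¬ (c.re + c.imI + c.imJ + c.imK ∈ (⊥ : Ideal R).jacobson ∨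
        c.re + c.imI + c.imJ + c.imK - 1 ∈ (⊥ : Ideal R).jacobson) →
      (phiEU (Quaternion R) k c : ℤ) =
        (-1) ^ k * 2 ^ ((4 * n * k - 4 * n - k) * r) *
          (-(2 ^ k) + (2 - 2 ^ r) ^ k)) := by
  classical
  have hI : (⊥ : Ideal R).jacobson = IsLocalRing.maximalIdeal R :=
    IsLocalRing.jacobson_eq_maximalIdeal ⊥ bot_ne_top
  rw [hI] at hres ⊢
  haveI hmax : (IsLocalRing.maximalIdeal R).IsMaximal := inferInstance
  letI : Field (R ⧸ IsLocalRing.maximalIdeal R) := Ideal.Quotient.field _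
  haveI : Finite (R ⧸ IsLocalRing.maximalIdeal R) :=
    Finite.of_surjective _ Ideal.Quotient.mk_surjective
  letI : Fintype (R ⧸ IsLocalRing.maximalIdeal R) := Fintype.ofFinite _
  have hcardF : Fintype.card (R ⧸ IsLocalRing.maximalIdeal R) = 2 ^ r := by
    rw [← Nat.card_eq_fintype_card, hres]
  have h2F : (2 : R ⧸ IsLocalRing.maximalIdeal R) = 0 := by
    have h := FiniteField.cast_card_eq_zero (R ⧸ IsLocalRing.maximalIdeal R)
    rw [hcardF] at h
    push_cast at h
    exact pow_eq_zero_iff (by omega) |>.mp h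
  have h2 : (2 : R) ∈ IsLocalRing.maximalIdeal R := by
    rw [← Ideal.Quotient.eq_zero_iff_mem,
      show (Ideal.Quotient.mk (IsLocalRing.maximalIdeal R) (2 : R))
        = (2 : R ⧸ IsLocalRing.maximalIdeal R) from map_ofNat _ 2]
    exact h2F
  obtain ⟨m, rfl⟩ : ∃ m, k = m + 1 := ⟨k - 1, by omega⟩
  have hm : 1 ≤ m := by omega
  have hrle : r ≤ n * r := by nlinarith
  have h2rpos : 0 < 2 ^ r := by positivity
  have hcardI : Nat.card (IsLocalRing.maximalIdeal R) = 2 ^ (n * r - r) := by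
    have hq := Submodule.card_eq_card_quotient_mul_card (IsLocalRing.maximalIdeal R)
    rw [Nat.card_eq_fintype_card (α := R), hcard, hres] at hq
    have hodd : 2 ^ (n * r - r) * 2 ^ r = 2 ^ (n * r) := by
      rw [← pow_add]
      congr 1
      omega
    exact Nat.eq_of_mul_eq_mul_right h2rpos (by rw [hodd, ← hq])
  have hker : Nat.card (RingHom.ker (qres (IsLocalRing.maximalIdeal R) h2))
      = 2 ^ (4 * n * r - r) := by
    rw [qker_card, hcardI, hcard, ← pow_mul, ← pow_add]
    congr 1
    have h4 : 4 * n * r = 4 * (n * r) := by ring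
    omega
  have hexp : (4 * n * r - r) * m = (4 * n * (m+1) - 4 * n - (m+1)) * r + r := by
    have l1 : 4 * n + (m+1) ≤ 4 * n * (m+1) := by nlinarith
    have l1' : 4 * n ≤ 4 * n * (m+1) := by omega
    have l2 : m + 1 ≤ 4 * n * (m+1) - 4 * n := by omega
    have l3 : r ≤ 4 * n * r := by nlinarith
    zify [l1', l2, l3, hrle]
    push_cast [Nat.cast_sub l3]
    ring
  have hphi : phiEU (Quaternion R) (m+1) c =
      Nat.card {y : Fin (m+1) → (R ⧸ IsLocalRing.maximalIdeal R) //
        (∀ i, IsExceptionalUnit (y i)) ∧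
          ∑ i, y i = qres (IsLocalRing.maximalIdeal R) h2 c} *
      Nat.card (RingHom.ker (qres (IsLocalRing.maximalIdeal R) h2)) ^ m :=
    phi_fiber (qres (IsLocalRing.maximalIdeal R) h2) (qres_surj _ h2)
      (qres_isUnit h2) m c
  have hY : Nat.card {y : Fin (m+1) → (R ⧸ IsLocalRing.maximalIdeal R) //
        (∀ i, IsExceptionalUnit (y i)) ∧
          ∑ i, y i = qres (IsLocalRing.maximalIdeal R) h2 c}
      = Ncnt (R ⧸ IsLocalRing.maximalIdeal R) (m+1)
          (qres (IsLocalRing.maximalIdeal R) h2 c) :=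
    Nat.card_congr (Equiv.subtypeEquivRight fun y =>
      and_congr_left fun _ => forall_congr' fun i => isExceptionalUnit_field_iff (y i))
  have hNcf := field_count r hr hcardF (m+1) (Nat.le_add_left 1 m)
    (qres (IsLocalRing.maximalIdeal R) h2 c)
  have hcond : (qres (IsLocalRing.maximalIdeal R) h2 c = 0 ∨
        qres (IsLocalRing.maximalIdeal R) h2 c = 1) ↔
      (c.re + c.imI + c.imJ + c.imK ∈ IsLocalRing.maximalIdeal R ∨
        c.re + c.imI + c.imJ + c.imK - 1 ∈ IsLocalRing.maximalIdeal R) := by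
    rw [qres_apply, Ideal.Quotient.eq_zero_iff_mem]
    refine or_congr Iff.rfl ?_
    rw [show (1 : R ⧸ IsLocalRing.maximalIdeal R)
        = Ideal.Quotient.mk (IsLocalRing.maximalIdeal R) (1 : R) from (map_one _).symm,
      Ideal.Quotient.mk_eq_mk_iff_sub_mem]
  have hphiZ : (phiEU (Quaternion R) (m+1) c : ℤ) =
      (Ncnt (R ⧸ IsLocalRing.maximalIdeal R) (m+1)
          (qres (IsLocalRing.maximalIdeal R) h2 c) : ℤ) * 2 ^ r *
        2 ^ ((4 * n * (m+1) - 4 * n - (m+1)) * r) := by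
    rw [hphi, hY, hker]
    push_cast
    rw [← pow_mul, hexp, pow_add]
    ring
  constructor
  · intro hc
    rw [if_pos (hcond.2 hc)] at hNcf
    rw [hphiZ, hNcf]
    ring
  · intro hc
    rw [if_neg (fun h => hc (hcond.1 h))] at hNcf
    rw [hphiZ, hNcf]
    ring
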